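/- Let g be the 4×4 symmetric matrix-valued function on ℝ⁴ (coordinates x,y,u,v) representing the metric g = λ(dx∘dx+dy∘dy+dx∘dy) + e^{−y}(2dx+dy)∘dv + e^{−x}(dx+2dy)∘du. Then for every point p ∈ ℝ⁴ and every real λ, the matrix g(p) is invertible and has signature (2,2) (two positive and two negative eigenvalues). -/

import Mathlib

/-!
The determinant of `g` is `9/16 e^{-2x} e^{-2y} > 0`, so `g` is invertible and the number of its
negative eigenvalues is even: `0`, `2` or `4`. If `g` were definite, its eigenvalues would all have
one sign, and then so would their first and third elementary symmetric functions `tr g` and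
`tr (adj g)`. But `tr g · tr (adj g) = -3/2 λ² (e^{-2x} + e^{-2y}) ≤ 0`, so the signature is `(2,2)`.
-/

open Real

/-- The coordinate matrix of the Type III metric
`g = λ(dx∘dx+dy∘dy+dx∘dy) + e^{−y}(2dx+dy)∘dv + e^{−x}(dx+2dy)∘du`
in the basis `(∂x,∂y,∂u,∂v)` at the point `(x,y,u,v)`. -/
noncomputable def gTypeIII (lam x y : ℝ) : Matrix (Fin 4) (Fin 4) ℝ :=
  !![lam, lam / 2, Real.exp (-x) / 2, Real.exp (-y);
     lam / 2, lam, Real.exp (-x), Real.exp (-y) / 2;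
     Real.exp (-x) / 2, Real.exp (-x), 0, 0;
     Real.exp (-y), Real.exp (-y) / 2, 0, 0]

open Finset

open Matrix in
theorem Matrix.IsHermitian.trace_adjugate_eq_sum_prod_eigenvalues {𝕜 n : Type*} [RCLike 𝕜]
    [Fintype n] [DecidableEq n] {A : Matrix n n 𝕜} (hA : A.IsHermitian) :
    A.adjugate.trace = ∑ i, ∏ j ∈ univ.erase i, (hA.eigenvalues j : 𝕜) := by
  conv_lhs => rw [hA.spectral_theorem]
  rw [Unitary.conjStarAlgAut_apply, adjugate_mul_distrib, adjugate_mul_distrib, trace_mul_comm,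
    Matrix.mul_assoc, ← adjugate_mul_distrib, Unitary.coe_star_mul_self, adjugate_one,
    Matrix.mul_one, adjugate_diagonal, trace_diagonal]
  simp

theorem Fin.sum_prod_univ_erase_four {R : Type*} [CommSemiring R] (m : Fin 4 → R) :
    ∑ i, ∏ j ∈ univ.erase i, m j
      = m 1 * m 2 * m 3 + m 0 * m 2 * m 3 + m 0 * m 1 * m 3 + m 0 * m 1 * m 2 := by
  rw [Fin.sum_univ_four, show univ.erase (0 : Fin 4) = {1, 2, 3} by decide,
    show univ.erase (1 : Fin 4) = {0, 2, 3} by decide,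
    show univ.erase (2 : Fin 4) = {0, 1, 3} by decide,
    show univ.erase (3 : Fin 4) = {0, 1, 2} by decide]
  simp [mul_assoc]

theorem card_pos_eq_two_and_card_neg_eq_two_of_prod_pos {m : Fin 4 → ℝ} (hprod : 0 < ∏ i, m i)
    (hindef : (∑ i, m i) * ∑ i, ∏ j ∈ univ.erase i, m j ≤ 0) :
    #{i | 0 < m i} = 2 ∧ #{i | m i < 0} = 2 := by
  rw [Fin.prod_univ_four] at hprod
  rw [Fin.sum_univ_four, Fin.sum_prod_univ_erase_four] at hindef
  have hne (i : Fin 4) : m i ≠ 0 := by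
    rintro hi
    fin_cases i <;> simp_all
  rcases (hne 0).lt_or_gt with h0 | h0 <;> rcases (hne 1).lt_or_gt with h1 | h1 <;>
    rcases (hne 2).lt_or_gt with h2 | h2 <;> rcases (hne 3).lt_or_gt with h3 | h3 <;>
    first
    | (constructor <;> rw [card_filter, Fin.sum_univ_four] <;>
        simp [h0, h1, h2, h3, h0.asymm, h1.asymm, h2.asymm, h3.asymm]); done
    | simp [mul_pos_iff, mul_neg_iff, h0, h1, h2, h3, h0.asymm, h1.asymm, h2.asymm, h3.asymm]
        at hprod; done
    | skip
  -- what is left are the two definite sign patterns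
  · have he1 : m 0 + m 1 + m 2 + m 3 < 0 := by linarith
    have he3 : m 1 * m 2 * m 3 + m 0 * m 2 * m 3 + m 0 * m 1 * m 3 + m 0 * m 1 * m 2 < 0 := by
      nlinarith [mul_pos_of_neg_of_neg h0 h1, mul_pos_of_neg_of_neg h2 h3]
    nlinarith
  · have he1 : 0 < m 0 + m 1 + m 2 + m 3 := by linarith
    have he3 : 0 < m 1 * m 2 * m 3 + m 0 * m 2 * m 3 + m 0 * m 1 * m 3 + m 0 * m 1 * m 2 := by
      nlinarith [mul_pos h0 h1, mul_pos h2 h3]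
    nlinarith

theorem gTypeIII_isHermitian (lam x y : ℝ) : (gTypeIII lam x y).IsHermitian := by
  ext i j
  fin_cases i <;> fin_cases j <;> simp [gTypeIII]

theorem gTypeIII_det (lam x y : ℝ) :
    (gTypeIII lam x y).det = 9 / 16 * exp (-x) ^ 2 * exp (-y) ^ 2 := by
  rw [Matrix.det_succ_row_zero]
  simp only [Fin.sum_univ_four]
  simp [Matrix.det_fin_three, gTypeIII, Fin.succAbove, Fin.lt_def]
  ring

theorem gTypeIII_trace (lam x y : ℝ) : (gTypeIII lam x y).trace = 2 * lam := by
  simp [gTypeIII, Matrix.trace, Fin.sum_univ_four]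
  ring

theorem gTypeIII_trace_adjugate (lam x y : ℝ) :
    (gTypeIII lam x y).adjugate.trace = -3 / 4 * lam * (exp (-x) ^ 2 + exp (-y) ^ 2) := by
  simp only [Matrix.trace, Fin.sum_univ_four, Matrix.diag, Matrix.adjugate_fin_succ_eq_det_submatrix]
  simp [Matrix.det_fin_three, gTypeIII, Fin.succAbove, Fin.lt_def]
  ring

theorem gTypeIII_nondegenerate_neutral_general (lam x y : ℝ) :
    IsUnit (gTypeIII lam x y) ∧
    (gTypeIII lam x y).IsHermitian ∧
    ∀ h : (gTypeIII lam x y).IsHermitian,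
      (Finset.univ.filter fun i => 0 < h.eigenvalues i).card = 2 ∧
      (Finset.univ.filter fun i => h.eigenvalues i < 0).card = 2 := by
  have hdet : 0 < (gTypeIII lam x y).det := by
    rw [gTypeIII_det]
    positivity
  refine ⟨(Matrix.isUnit_iff_isUnit_det _).2 hdet.ne'.isUnit, gTypeIII_isHermitian lam x y,
    fun h => card_pos_eq_two_and_card_neg_eq_two_of_prod_pos ?_ ?_⟩
  · simpa [h.det_eq_prod_eigenvalues] using hdet
  · have htrace := h.trace_eq_sum_eigenvalues
    have hadj := h.trace_adjugate_eq_sum_prod_eigenvalues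
    simp only [RCLike.ofReal_real_eq_id, id] at htrace hadj
    rw [← htrace, ← hadj, gTypeIII_trace, gTypeIII_trace_adjugate]
    nlinarith [sq_nonneg lam, sq_nonneg (exp (-x)), sq_nonneg (exp (-y))]

/-- For every point of `ℝ⁴` and every real `λ`, the metric matrix is invertible
and has signature `(2,2)`: exactly two positive and two negative eigenvalues. -/
theorem gTypeIII_nondegenerate_neutral (lam x y u v : ℝ) :
    IsUnit (gTypeIII lam x y) ∧
    (gTypeIII lam x y).IsHermitian ∧
    ∀ h : (gTypeIII lam x y).IsHermitian,
      (Finset.univ.filter fun i => 0 < h.eigenvalues i).card = 2 ∧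
      (Finset.univ.filter fun i => h.eigenvalues i < 0).card = 2 :=
  gTypeIII_nondegenerate_neutral_general lam x y
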